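/- arXiv:1601.01197 — 5 statements merged into one kernel-verified Lean document; each statement's English description precedes it below -/
import Mathlib

section
/- Let G be a finite simple graph on vertex set V, let n ≥ 4 be an even integer, and let f : ZMod n → V be an injective map whose image C is an induced cycle of G, i.e., for all i, j in ZMod n, f(i) and f(j) are adjacent in G if and only if j = i + 1 or j = i - 1. Suppose every vertex of C has degree at most 3 in G. Then every proper 3-coloring of the induced subgraph of G on V \ C extends to a proper 3-coloring of G. -/
/-- A color distinct from both `a` and `b`. -/
def other3 (a b : Fin 3) : Fin 3 :=
  if a ≠ 0 ∧ b ≠ 0 then 0 else if a ≠ 1 ∧ b ≠ 1 then 1 else 2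

lemma other3_ne : ∀ a b : Fin 3, other3 a b ≠ a ∧ other3 a b ≠ b := by decide

lemma aux_nonconst (n : ℕ) (hn : 2 ≤ n) (b : ZMod n → Fin 3) (hb : b (-1) ≠ b 0) :
    ∃ φ : ZMod n → Fin 3, (∀ i, φ i ≠ b i) ∧ ∀ i, φ i ≠ φ (i + 1) := by
  haveI : NeZero n := ⟨by omega⟩
  haveI : Fact (1 < n) := ⟨by omega⟩
  let ψ : ℕ → Fin 3 := fun m => Nat.rec (b (-1))
    (fun m ih => other3 (b ((m + 1 : ℕ) : ZMod n)) ih) m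
  have hψ0 : ψ 0 = b (-1) := rfl
  have hψs : ∀ m, ψ (m + 1) = other3 (b ((m + 1 : ℕ) : ZMod n)) (ψ m) := fun m => rfl
  have hcast : ∀ i : ZMod n, ((i.val : ℕ) : ZMod n) = i := fun i =>
    ZMod.natCast_rightInverse i
  have claim1 : ∀ i : ZMod n, ψ i.val ≠ b i := by
    intro i
    rcases Nat.eq_zero_or_pos i.val with h | hpos
    · have hi : i = 0 := by rw [← hcast i, h]; simp
      rw [h, hψ0, hi]; exact hb
    · obtain ⟨m, h⟩ : ∃ m, i.val = m + 1 := ⟨i.val - 1, by omega⟩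
      rw [h, hψs]
      have : ((m + 1 : ℕ) : ZMod n) = i := by rw [← h, hcast]
      rw [this]
      exact (other3_ne _ _).1
  refine ⟨fun i => ψ i.val, claim1, ?_⟩
  · intro i
    show ψ i.val ≠ ψ (i + 1).val
    have hvlt : i.val < n := ZMod.val_lt i
    by_cases h : i.val + 1 < n
    · have hval : (i + 1).val = i.val + 1 := by
        rw [ZMod.val_add_of_lt] <;> rw [ZMod.val_one]; exact h
      rw [hval, hψs]
      exact fun hcontra => (other3_ne _ _).2 hcontra.symm
    · have hvn : i.val = n - 1 := by omega
      have hi : i = -1 := by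
        rw [← hcast i, hvn]
        rw [Nat.cast_sub (by omega)]; simp
      have h1 : i + 1 = 0 := by rw [hi]; ring
      rw [h1, ZMod.val_zero, hψ0, ← hi]
      exact claim1 i

lemma aux_const (n : ℕ) (hn : 2 ≤ n) (hne : Even n) (b : ZMod n → Fin 3)
    (hb : ∀ i, b i = b 0) :
    ∃ φ : ZMod n → Fin 3, (∀ i, φ i ≠ b i) ∧ ∀ i, φ i ≠ φ (i + 1) := by
  haveI : NeZero n := ⟨by omega⟩
  haveI : Fact (1 < n) := ⟨by omega⟩
  set x := other3 (b 0) (b 0) with hx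
  set y := other3 (b 0) x with hy
  have hxb : x ≠ b 0 := (other3_ne _ _).1
  have hyb : y ≠ b 0 := (other3_ne _ _).1
  have hyx : y ≠ x := (other3_ne _ _).2
  refine ⟨fun i => if Even i.val then x else y, ?_, ?_⟩
  · intro i
    show (if Even i.val then x else y) ≠ b i
    rw [hb i]
    by_cases h : Even i.val
    · simp [h, hxb]
    · simp [h, hyb]
  · intro i
    show (if Even i.val then x else y) ≠ (if Even (i + 1).val then x else y)
    have hvlt : i.val < n := ZMod.val_lt i
    by_cases h : i.val + 1 < n
    · have hval : (i + 1).val = i.val + 1 := by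
        rw [ZMod.val_add_of_lt] <;> rw [ZMod.val_one]; exact h
      rw [hval]
      by_cases he : Even i.val
      · have h2 : ¬ Even (i.val + 1) := by simp [Nat.even_add_one, he]
        simp only [he, h2, if_true, if_false]
        exact fun hc => hyx hc.symm
      · have h2 : Even (i.val + 1) := by simp [Nat.even_add_one, he]
        simp only [he, h2, if_true, if_false]
        exact hyx
    · have hvn : i.val = n - 1 := by omega
      have hodd : ¬ Even i.val := by
        rw [hvn, Nat.even_sub (by omega)]; simp [hne]
      have hcast : ((i.val : ℕ) : ZMod n) = i := ZMod.natCast_rightInverse i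
      have hi : i = -1 := by
        rw [← hcast, hvn, Nat.cast_sub (by omega)]; simp
      have h1 : i + 1 = 0 := by rw [hi]; ring
      rw [h1, ZMod.val_zero]
      rw [if_neg hodd, if_pos Even.zero]
      exact hyx

lemma cycle_list_color (n : ℕ) (hn : 2 ≤ n) (hne : Even n) (b : ZMod n → Fin 3) :
    ∃ φ : ZMod n → Fin 3, (∀ i, φ i ≠ b i) ∧ ∀ i, φ i ≠ φ (i + 1) := by
  haveI : NeZero n := ⟨by omega⟩
  by_cases hcst : ∀ k : ZMod n, b k = b (k + 1)
  · apply aux_const n hn hne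
    have key : ∀ m : ℕ, b ((m : ℕ) : ZMod n) = b 0 := by
      intro m; induction m with
      | zero => simp
      | succ m ih => push_cast; rw [← hcst]; exact ih
    intro i
    have := key i.val
    rwa [ZMod.natCast_rightInverse i] at this
  · push_neg at hcst
    obtain ⟨k, hk⟩ := hcst
    obtain ⟨φ', h1, h2⟩ := aux_nonconst n hn (fun i => b (i + (k + 1)))
      (by simpa using hk)
    refine ⟨fun i => φ' (i - (k + 1)), fun i => ?_, fun i => ?_⟩
    · have := h1 (i - (k + 1)); simpa using this
    · have := h2 (i - (k + 1))
      have he : i - (k + 1) + 1 = i + 1 - (k + 1) := by ring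
      rwa [he] at this

/-- Reduction of Example 5.1, even case: if `C` is an induced cycle of even
length `n ≥ 4` in a triangle-free graph, all of whose vertices have degree at
most 3, then every proper 3-coloring of the graph induced on the complement of
`C` extends to a proper 3-coloring of the whole graph. -/
theorem extend_coloring_even_cycle_degree_three {V : Type*} [Fintype V]
    (G : SimpleGraph V) [DecidableRel G.Adj]
    (n : ℕ) (hn : 4 ≤ n) (hne : Even n)
    (f : ZMod n → V) (hf : Function.Injective f)
    (hcyc : ∀ i j : ZMod n, G.Adj (f i) (f j) ↔ j = i + 1 ∨ j = i - 1)
    (hdeg : ∀ i : ZMod n, G.degree (f i) ≤ 3)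
    (c : ((Set.range f)ᶜ : Set V) → Fin 3)
    (hc : ∀ a b, (G.induce (Set.range f)ᶜ).Adj a b → c a ≠ c b) :
    ∃ c' : V → Fin 3, (∀ a b, G.Adj a b → c' a ≠ c' b) ∧
      ∀ u : ((Set.range f)ᶜ : Set V), c' u = c u := by
  classical
  haveI : NeZero n := ⟨by omega⟩
  have h2ne : (2 : ZMod n) ≠ 0 := by
    have : ((2 : ℕ) : ZMod n) ≠ 0 := by
      rw [Ne, ZMod.natCast_eq_zero_iff]
      exact fun h => absurd (Nat.le_of_dvd (by norm_num) h) (by omega)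
    simpa using this
  -- every cycle vertex has at most one neighbor outside the cycle
  have huniq : ∀ (i : ZMod n) (u w : V), u ∉ Set.range f → w ∉ Set.range f →
      G.Adj (f i) u → G.Adj (f i) w → u = w := by
    intro i u w hu hw hau haw
    by_contra hne'
    have ha1 : G.Adj (f i) (f (i + 1)) := (hcyc i (i + 1)).2 (Or.inl rfl)
    have ha2 : G.Adj (f i) (f (i - 1)) := (hcyc i (i - 1)).2 (Or.inr rfl)
    have hd12 : f (i + 1) ≠ f (i - 1) := by
      intro hcontra
      have := hf hcontra
      have : (2 : ZMod n) = 0 := by linear_combination this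
      exact h2ne this
    have hsub : ({f (i + 1), f (i - 1), u, w} : Finset V) ⊆ G.neighborFinset (f i) := by
      intro v hv
      simp only [Finset.mem_insert, Finset.mem_singleton] at hv
      rw [SimpleGraph.mem_neighborFinset]
      rcases hv with h | h | h | h <;> subst h
      exacts [ha1, ha2, hau, haw]
    have hcard : ({f (i + 1), f (i - 1), u, w} : Finset V).card = 4 := by
      rw [Finset.card_insert_of_notMem, Finset.card_insert_of_notMem,
        Finset.card_insert_of_notMem, Finset.card_singleton]
      · simp [hne']
      · simp only [Finset.mem_insert, Finset.mem_singleton]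
        push_neg
        exact ⟨fun h => hu ⟨i - 1, h⟩, fun h => hw ⟨i - 1, h⟩⟩
      · simp only [Finset.mem_insert, Finset.mem_singleton]
        push_neg
        exact ⟨hd12, fun h => hu ⟨i + 1, h⟩, fun h => hw ⟨i + 1, h⟩⟩
    have : 4 ≤ G.degree (f i) := by
      rw [← hcard, SimpleGraph.degree]
      exact Finset.card_le_card hsub
    have := hdeg i
    omega
  -- forbidden color at each cycle vertex
  have hball : ∀ i : ZMod n, ∃ x : Fin 3,
      ∀ u : ((Set.range f)ᶜ : Set V), G.Adj (f i) u → c u = x := by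
    intro i
    by_cases h : ∃ u : ((Set.range f)ᶜ : Set V), G.Adj (f i) u
    · obtain ⟨u, hu⟩ := h
      exact ⟨c u, fun w hw => congrArg c (Subtype.ext (huniq i w u w.2 u.2 hw hu))⟩
    · exact ⟨0, fun u hu => absurd ⟨u, hu⟩ h⟩
  choose b hb using hball
  obtain ⟨φ, hφ1, hφ2⟩ := cycle_list_color n (by omega) hne b
  refine ⟨fun v => if h : ∃ i, f i = v then φ h.choose else c ⟨v, h⟩, ?_, ?_⟩
  · intro a a' hadj
    by_cases ha : ∃ i, f i = a <;> by_cases ha' : ∃ j, f j = a'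
    · -- both on the cycle
      simp only [dif_pos ha, dif_pos ha']
      set i := ha.choose with hi
      set j := ha'.choose with hj
      have hfi : f i = a := ha.choose_spec
      have hfj : f j = a' := ha'.choose_spec
      rw [← hfi, ← hfj] at hadj
      rcases (hcyc i j).1 hadj with h | h
      · rw [h]; exact hφ2 i
      · rw [h]
        intro hcontra
        have := hφ2 (i - 1)
        rw [sub_add_cancel] at this
        exact this hcontra.symm
    · -- a on cycle, a' outside
      simp only [dif_pos ha, dif_neg ha']
      have hfi : f ha.choose = a := ha.choose_spec
      have : c ⟨a', ha'⟩ = b ha.choose := hb _ ⟨a', ha'⟩ (by rwa [hfi])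
      rw [this]
      exact hφ1 _
    · -- a outside, a' on cycle
      simp only [dif_neg ha, dif_pos ha']
      have hfj : f ha'.choose = a' := ha'.choose_spec
      have : c ⟨a, ha⟩ = b ha'.choose := hb _ ⟨a, ha⟩ (by rw [hfj]; exact hadj.symm)
      rw [this]
      exact fun hcontra => hφ1 _ hcontra.symm
    · -- both outside
      simp only [dif_neg ha, dif_neg ha']
      exact hc ⟨a, ha⟩ ⟨a', ha'⟩ hadj
  · intro u
    have hu : ¬∃ i, f i = (u : V) := u.2
    exact dif_neg hu
end

section
/- Let G be a finite simple graph on vertex set V, let n ≥ 3 be an odd integer, and let f : ZMod n → V be an injective map whose image C is an induced cycle of G, i.e., for all i, j in ZMod n, f(i) and f(j) are adjacent in G if and only if j = i + 1 or j = i - 1. Suppose that every vertex of C has degree at most 3 in G, and that there exist adjacent vertices x, y of G with x, y ∉ C such that x has a neighbor in C and y has a neighbor in C. Then every proper 3-coloring of the induced subgraph of G on V \ C extends to a proper 3-coloring of G. -/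
/-!
A vertex of the cycle has its two cycle neighbors and degree at most three, so it has at most
one neighbor off the cycle, and at least two of the three colors remain available at it. A
cycle whose lists all have at least two colors is list-colorable as soon as two of the lists
differ: start just after a place where the list changes and color greedily around. The lists
at the cycle neighbors of `x` and `y` differ, because `x` and `y` have different colors.
-/

open Finset Function

theorem ZMod.exists_add_one_ne {n : ℕ} [NeZero n] {β : Type*} (b : ZMod n → β) {i j : ZMod n}
    (h : b i ≠ b j) : ∃ k, b (k + 1) ≠ b k := by
  by_contra! hb
  have hconst : ∀ m : ℕ, b (j + m) = b j := by
    intro m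
    induction m with
    | zero => simp
    | succ m ih => rw [Nat.cast_succ, ← add_assoc, hb, ih]
  exact h (by simpa using hconst (i - j).val)

theorem ZMod.add_one_ne_sub_one {n : ℕ} (hn : 3 ≤ n) (i : ZMod n) : i + 1 ≠ i - 1 := by
  intro h
  have h2 : ((2 : ℕ) : ZMod n) = 0 := by push_cast; linear_combination h
  have := Nat.le_of_dvd two_pos ((ZMod.natCast_eq_zero_iff 2 n).mp h2)
  omega

theorem exists_seq_mem_ne {α : Type*} (T : ℕ → Finset α) (hT : ∀ k, 2 ≤ #(T (k + 1)))
    (a : α) :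
    ∃ s : ℕ → α, s 0 = a ∧ ∀ k, s (k + 1) ∈ T (k + 1) ∧ s (k + 1) ≠ s k := by
  choose next hnext using fun k => exists_mem_ne (hT k)
  exact ⟨fun k => Nat.rec a (fun k b => next k b) k, rfl, fun k => hnext k _⟩

section ListColoring

variable {α : Type*} [DecidableEq α]

/-- Greedy coloring from `0` around to `-1`, where both the previous color and `a` are
excluded. -/
theorem exists_cycle_list_coloring_of_start_zero {n : ℕ} (hn : 2 ≤ n) (L : ZMod n → Finset α)
    (hL : ∀ i, 2 ≤ #(L i)) {a : α} (ha : a ∈ L 0) (ha' : 2 ≤ #((L (-1)).erase a)) :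
    ∃ g : ZMod n → α, (∀ i, g i ∈ L i) ∧ ∀ i, g (i + 1) ≠ g i := by
  have : NeZero n := ⟨by omega⟩
  have hlast : ((n - 1 : ℕ) : ZMod n) = -1 := by
    rw [Nat.cast_sub (by omega), ZMod.natCast_self, Nat.cast_one, zero_sub]
  let T : ℕ → Finset α := fun k => if k = n - 1 then (L k).erase a else L k
  have hTL : ∀ k, T k ⊆ L k := fun k => by
    unfold T; split_ifs
    exacts [erase_subset _ _, subset_rfl]
  obtain ⟨s, hs0, hs⟩ := exists_seq_mem_ne T (fun k => by
    unfold T; split_ifs with hk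
    · rwa [hk, hlast]
    · exact hL _) a
  have hsL : ∀ k : ℕ, s k ∈ L k
    | 0 => by simpa [hs0] using ha
    | k + 1 => hTL _ (hs k).1
  have hs_last : s (n - 1) ≠ a := by
    obtain ⟨m, hm⟩ : ∃ m, n - 1 = m + 1 := ⟨n - 2, by omega⟩
    have h := (hs m).1
    simp only [T, ← hm, if_true] at h
    exact ne_of_mem_erase h
  refine ⟨fun i => s i.val, fun i => by simpa using hsL i.val, fun i => ?_⟩
  have hi : i + 1 = ((i.val + 1 : ℕ) : ZMod n) := by simp
  rcases (show i.val + 1 ≤ n from ZMod.val_lt i).lt_or_eq with hlt | heq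
  · simp only [hi, ZMod.val_cast_of_lt hlt]
    exact (hs _).2
  · have hi₁ : i + 1 = 0 := by rw [hi, heq, ZMod.natCast_self]
    show s (i + 1).val ≠ s i.val
    rw [hi₁, ZMod.val_zero, hs0, show i.val = n - 1 by omega]
    exact hs_last.symm

theorem exists_cycle_list_coloring_of_start {n : ℕ} (hn : 2 ≤ n) (L : ZMod n → Finset α)
    (hL : ∀ i, 2 ≤ #(L i)) {i₀ : ZMod n} {a : α} (ha : a ∈ L (i₀ + 1))
    (ha' : 2 ≤ #((L i₀).erase a)) :
    ∃ g : ZMod n → α, (∀ i, g i ∈ L i) ∧ ∀ i, g (i + 1) ≠ g i := by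
  obtain ⟨g, hgL, hg⟩ := exists_cycle_list_coloring_of_start_zero hn
    (fun i => L (i + (i₀ + 1))) (fun i => hL _) (by simpa using ha) (by simpa using ha')
  refine ⟨fun i => g (i - (i₀ + 1)), fun i => by simpa using hgL (i - (i₀ + 1)),
    fun i => ?_⟩
  simpa [sub_add_eq_add_sub] using hg (i - (i₀ + 1))

theorem exists_cycle_list_coloring {n : ℕ} (hn : 2 ≤ n) (L : ZMod n → Finset α)
    (hL : ∀ i, 2 ≤ #(L i)) {i j : ZMod n} (hij : L i ≠ L j) :
    ∃ g : ZMod n → α, (∀ i, g i ∈ L i) ∧ ∀ i, g (i + 1) ≠ g i := by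
  have : NeZero n := ⟨by omega⟩
  obtain ⟨k, hk⟩ := ZMod.exists_add_one_ne L hij
  by_cases hsub : L (k + 1) ⊆ L k
  · obtain ⟨a, ha⟩ := card_pos.mp (two_pos.trans_le (hL (k + 1)))
    refine exists_cycle_list_coloring_of_start hn L hL ha ?_
    have hlt := card_lt_card (ssubset_of_subset_of_ne hsub hk)
    have hcard := hL (k + 1)
    rw [card_erase_of_mem (hsub ha)]
    omega
  · obtain ⟨a, ha, ha'⟩ := not_subset.mp hsub
    exact exists_cycle_list_coloring_of_start hn L hL ha
      (by rw [erase_eq_of_notMem ha']; exact hL k)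

end ListColoring

namespace SimpleGraph

variable {V : Type*} (G : SimpleGraph V)

theorem eq_of_mem_neighborSet_sdiff_of_degree_le_three {v u₁ u₂ w₁ w₂ : V}
    [Fintype (G.neighborSet v)] (hdeg : G.degree v ≤ 3) (hu : u₁ ≠ u₂) (h₁ : G.Adj v u₁)
    (h₂ : G.Adj v u₂) (hw₁ : w₁ ∈ G.neighborSet v \ {u₁, u₂})
    (hw₂ : w₂ ∈ G.neighborSet v \ {u₁, u₂}) : w₁ = w₂ := by
  classical
  have hcard : #(G.neighborFinset v \ {u₁, u₂}) ≤ 1 := by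
    rw [card_sdiff_of_subset (by simp [insert_subset_iff, h₁, h₂]), card_pair hu,
      card_neighborFinset_eq_degree]
    omega
  exact card_le_one.mp hcard w₁ (by simpa using hw₁) w₂ (by simpa using hw₂)

variable {G}

theorem eq_of_adj_of_induced_cycle {n : ℕ} (hn : 3 ≤ n) {f : ZMod n → V} (hf : Injective f)
    (hcyc : ∀ i j : ZMod n, G.Adj (f i) (f j) ↔ j = i + 1 ∨ j = i - 1) {i : ZMod n}
    [Fintype (G.neighborSet (f i))] (hdeg : G.degree (f i) ≤ 3)
    (w₁ w₂ : ((Set.range f)ᶜ : Set V)) (h₁ : G.Adj (f i) w₁) (h₂ : G.Adj (f i) w₂) :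
    w₁ = w₂ := by
  have hoff : ∀ w : ((Set.range f)ᶜ : Set V), (w : V) ∉ ({f (i + 1), f (i - 1)} : Set V) :=
    fun w h => w.2 (by rcases h with h | h <;> exact ⟨_, h.symm⟩)
  exact Subtype.ext <| G.eq_of_mem_neighborSet_sdiff_of_degree_le_three hdeg
    (hf.ne (ZMod.add_one_ne_sub_one hn i)) ((hcyc i _).2 (.inl rfl)) ((hcyc i _).2 (.inr rfl))
    ⟨h₁, hoff w₁⟩ ⟨h₂, hoff w₂⟩

variable {α : Type*}

theorem exists_coloring_of_compatible {ι : Type*} {f : ι → V} (hf : Injective f) (g : ι → α)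
    (c : ((Set.range f)ᶜ : Set V) → α) (hg : ∀ i j, G.Adj (f i) (f j) → g i ≠ g j)
    (hc : ∀ a b, (G.induce (Set.range f)ᶜ).Adj a b → c a ≠ c b)
    (hgc : ∀ i (w : ((Set.range f)ᶜ : Set V)), G.Adj (f i) w → g i ≠ c w) :
    ∃ c' : V → α, (∀ a b, G.Adj a b → c' a ≠ c' b) ∧
      ∀ u : ((Set.range f)ᶜ : Set V), c' u = c u := by
  classical
  let c' : V → α := fun v =>
    if h : v ∈ Set.range f then g ((Equiv.ofInjective f hf).symm ⟨v, h⟩) else c ⟨v, h⟩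
  have hc'f : ∀ i, c' (f i) = g i := fun i => by simp [c']
  have hc'c : ∀ u : ((Set.range f)ᶜ : Set V), c' u = c u := fun u => dif_neg u.2
  refine ⟨c', fun a b hab => ?_, hc'c⟩
  by_cases ha : a ∈ Set.range f <;> by_cases hb : b ∈ Set.range f
  · obtain ⟨⟨i, rfl⟩, ⟨j, rfl⟩⟩ := And.intro ha hb
    rw [hc'f, hc'f]
    exact hg i j hab
  · obtain ⟨i, rfl⟩ := ha
    rw [hc'f, hc'c ⟨b, hb⟩]
    exact hgc i ⟨b, hb⟩ hab
  · obtain ⟨j, rfl⟩ := hb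
    rw [hc'f, hc'c ⟨a, ha⟩]
    exact (hgc j ⟨a, ha⟩ hab.symm).symm
  · rw [hc'c ⟨a, ha⟩, hc'c ⟨b, hb⟩]
    exact hc ⟨a, ha⟩ ⟨b, hb⟩ hab

variable (G) [Fintype α]

open Classical in
noncomputable def availableColors {S : Set V} (c : S → α) (v : V) : Finset α :=
  {t | ∀ w : S, G.Adj v w → c w ≠ t}

variable {G} {S : Set V} {c : S → α} {v : V}

theorem mem_availableColors {t : α} :
    t ∈ G.availableColors c v ↔ ∀ w : S, G.Adj v w → c w ≠ t := by
  simp [availableColors]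

theorem erase_subset_availableColors [DecidableEq α] {w : S} (hw : G.Adj v w)
    (huniq : ∀ w₁ w₂ : S, G.Adj v w₁ → G.Adj v w₂ → w₁ = w₂) :
    univ.erase (c w) ⊆ G.availableColors c v := fun _ ht =>
  mem_availableColors.mpr fun w' hw' => huniq w w' hw hw' ▸ (ne_of_mem_erase ht).symm

theorem card_le_card_availableColors_add_one [DecidableEq α]
    (huniq : ∀ w₁ w₂ : S, G.Adj v w₁ → G.Adj v w₂ → w₁ = w₂) :
    Fintype.card α ≤ #(G.availableColors c v) + 1 := by
  by_cases h : ∃ w : S, G.Adj v w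
  · obtain ⟨w, hw⟩ := h
    have := card_le_card (erase_subset_availableColors (c := c) hw huniq)
    rw [card_erase_of_mem (mem_univ _), card_univ] at this
    omega
  · rw [not_exists] at h
    have : G.availableColors c v = univ :=
      eq_univ_of_forall fun t => mem_availableColors.mpr fun w hw => absurd hw (h w)
    simp [this]

end SimpleGraph

open SimpleGraph in
theorem extend_coloring_odd_cycle_degree_three_general {V : Type*} [Fintype V]
    (G : SimpleGraph V) [DecidableRel G.Adj]
    (n : ℕ) (hn : 3 ≤ n)
    (f : ZMod n → V) (hf : Function.Injective f)
    (hcyc : ∀ i j : ZMod n, G.Adj (f i) (f j) ↔ j = i + 1 ∨ j = i - 1)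
    (hdeg : ∀ i : ZMod n, G.degree (f i) ≤ 3)
    (x y : V) (hxy : G.Adj x y)
    (hx : x ∉ Set.range f) (hy : y ∉ Set.range f)
    (hxC : ∃ i : ZMod n, G.Adj x (f i)) (hyC : ∃ i : ZMod n, G.Adj y (f i))
    (c : ((Set.range f)ᶜ : Set V) → Fin 3)
    (hc : ∀ a b, (G.induce (Set.range f)ᶜ).Adj a b → c a ≠ c b) :
    ∃ c' : V → Fin 3, (∀ a b, G.Adj a b → c' a ≠ c' b) ∧
      ∀ u : ((Set.range f)ᶜ : Set V), c' u = c u := by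
  have huniq := fun i => eq_of_adj_of_induced_cycle hn hf hcyc (hdeg i)
  let L : ZMod n → Finset (Fin 3) := fun i => G.availableColors c (f i)
  have hL : ∀ i, 2 ≤ #(L i) := fun i => by
    simpa using card_le_card_availableColors_add_one (c := c) (huniq i)
  obtain ⟨ix, hix⟩ := hxC
  obtain ⟨iy, hiy⟩ := hyC
  have hcxy : c ⟨x, hx⟩ ≠ c ⟨y, hy⟩ := hc ⟨x, hx⟩ ⟨y, hy⟩ hxy
  -- `y` is the only neighbor of `f iy` off the cycle, so the color of `x` is available there
  have hLxy : L ix ≠ L iy := fun h =>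
    have hx_avail : c ⟨x, hx⟩ ∈ L iy :=
      erase_subset_availableColors (w := ⟨y, hy⟩) hiy.symm (huniq iy)
        (mem_erase.mpr ⟨hcxy, mem_univ _⟩)
    mem_availableColors.mp (h ▸ hx_avail) ⟨x, hx⟩ hix.symm rfl
  obtain ⟨g, hgL, hg⟩ := exists_cycle_list_coloring (by omega) L hL hLxy
  refine exists_coloring_of_compatible hf g c (fun i j hij => ?_) hc
    fun i w hw => (mem_availableColors.mp (hgL i) w hw).symm
  rcases (hcyc i j).mp hij with rfl | rfl
  · exact (hg i).symm
  · simpa using hg (i - 1)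

/-- Reduction of Example 5.1, odd case: let `C` be an induced cycle of odd
length `n ≥ 3`, all of whose vertices have degree at most 3, and suppose there
are adjacent vertices `x, y` outside `C`, each with a neighbor in `C`.  Then
every proper 3-coloring of the graph induced on the complement of `C` extends
to a proper 3-coloring of the whole graph. -/
theorem extend_coloring_odd_cycle_degree_three {V : Type*} [Fintype V]
    (G : SimpleGraph V) [DecidableRel G.Adj]
    (n : ℕ) (hn : 3 ≤ n) (hodd : Odd n)
    (f : ZMod n → V) (hf : Function.Injective f)
    (hcyc : ∀ i j : ZMod n, G.Adj (f i) (f j) ↔ j = i + 1 ∨ j = i - 1)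
    (hdeg : ∀ i : ZMod n, G.degree (f i) ≤ 3)
    (x y : V) (hxy : G.Adj x y)
    (hx : x ∉ Set.range f) (hy : y ∉ Set.range f)
    (hxC : ∃ i : ZMod n, G.Adj x (f i)) (hyC : ∃ i : ZMod n, G.Adj y (f i))
    (c : ((Set.range f)ᶜ : Set V) → Fin 3)
    (hc : ∀ a b, (G.induce (Set.range f)ᶜ).Adj a b → c a ≠ c b) :
    ∃ c' : V → Fin 3, (∀ a b, G.Adj a b → c' a ≠ c' b) ∧
      ∀ u : ((Set.range f)ᶜ : Set V), c' u = c u :=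
  extend_coloring_odd_cycle_degree_three_general G n hn f hf hcyc hdeg x y hxy hx hy hxC hyC c hc
end

section
/- Let n ≥ 3 be an odd integer and let L : ZMod n → Finset ℕ be an assignment of color lists to the vertices of the cycle C_n such that |L(v)| ≥ 2 for every v. Then there exists a function c : ZMod n → ℕ with c(v) ∈ L(v) for every v and c(v) ≠ c(v+1) for every v, if and only if it is not the case that all the lists L(v) are equal to one common 2-element set (i.e., unless there exists A : Finset ℕ with |A| = 2 and L(v) = A for every v). -/
/-!
A proper colouring from lists all equal to `{a, b}` alternates, hence is invariant under the
shift by `2`; for odd `n` this shift generates `ZMod n`, so the colouring would be constant.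

Otherwise some vertex `w` has a colour `x` such that `L (w - 1)` keeps two colours besides `x`:
either some list has more than two colours, or two consecutive lists are different pairs.
Colour greedily along the path `w, w + 1, …, w - 1` starting with `x`; every vertex but the last
avoids one colour, and the last one avoids two.
-/

theorem Function.Periodic.apply_eq_of_isUnit {n : ℕ} {α : Type*} {c : ZMod n → α} {p : ZMod n}
    (hc : Function.Periodic c p) (hp : IsUnit p) (v w : ZMod n) : c w = c v := by
  obtain ⟨u, rfl⟩ := hp
  set k : ℤ := ZMod.cast ((w - v) * ((u⁻¹ : (ZMod n)ˣ) : ZMod n))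
  have hk : (k : ZMod n) * u = w - v := by
    rw [ZMod.intCast_zmod_cast, Units.inv_mul_cancel_right]
  simpa [hk] using hc.int_mul k v

theorem ZMod.isUnit_two_of_odd {n : ℕ} (hn : Odd n) : IsUnit (2 : ZMod n) := by
  exact_mod_cast (ZMod.isUnit_iff_coprime 2 n).mpr (Nat.coprime_two_left.mpr hn)

def IsCycleListColoring {n : ℕ} {α : Type*} (L : ZMod n → Finset α) (c : ZMod n → α) : Prop :=
  (∀ v, c v ∈ L v) ∧ ∀ v, c v ≠ c (v + 1)

section

variable {n : ℕ} {α : Type*}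

theorem not_isCycleListColoring_of_odd_of_eq_pair [DecidableEq α] (hn : Odd n)
    {L : ZMod n → Finset α} {a b : α} (hL : ∀ v, L v = {a, b}) (c : ZMod n → α) :
    ¬ IsCycleListColoring L c := by
  rintro ⟨hmem, hne⟩
  have hpair : ∀ v, c v = a ∨ c v = b := fun v => by simpa [hL v] using hmem v
  have hper : Function.Periodic c 2 := fun v => by
    have h₁ := hne v
    have h₂ := hne (v + 1)
    rw [add_assoc, one_add_one_eq_two] at h₂
    grind [hpair v, hpair (v + 1), hpair (v + 2)]
  have h₀ := hne 0
  rw [zero_add] at h₀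
  exact h₀ (hper.apply_eq_of_isUnit (ZMod.isUnit_two_of_odd hn) 1 0)

theorem exists_seq_mem_ne_s5 (M : ℕ → Finset α) (hM : ∀ k, 2 ≤ (M (k + 1)).card) (x : α) :
    ∃ d : ℕ → α, d 0 = x ∧ ∀ k, d (k + 1) ∈ M (k + 1) ∧ d (k + 1) ≠ d k := by
  choose next hnext_mem hnext_ne using fun k => (M (k + 1)).exists_mem_ne (hM k)
  exact ⟨fun k => Nat.rec x next k, rfl, fun k => ⟨hnext_mem _ _, hnext_ne _ _⟩⟩

theorem exists_isCycleListColoring_of_two_le_card_erase [DecidableEq α] (hn : 1 < n)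
    {L : ZMod n → Finset α} (hL : ∀ v, 2 ≤ (L v).card) {w : ZMod n} {x : α} (hx : x ∈ L w)
    (hlast : 2 ≤ ((L (w - 1)).erase x).card) : ∃ c, IsCycleListColoring L c := by
  have : NeZero n := ⟨by omega⟩
  have hcast_last : ∀ k : ℕ, k + 1 = n → w + (k : ZMod n) = w - 1 := fun k hk => by
    have : (k : ZMod n) + 1 = 0 := by rw [← Nat.cast_add_one, hk, ZMod.natCast_self]
    rw [eq_neg_of_add_eq_zero_left this, ← sub_eq_add_neg]
  let M : ℕ → Finset α := fun k => if k + 1 = n then (L (w + k)).erase x else L (w + k)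
  have hM : ∀ k, 2 ≤ (M (k + 1)).card := fun k => by
    by_cases hk : k + 1 + 1 = n
    · simp only [M, hk, if_true]
      rwa [hcast_last _ hk]
    · simp only [M, hk, if_false]
      exact hL _
  obtain ⟨d, hd0, hd⟩ := exists_seq_mem_ne_s5 M hM x
  have hd_mem : ∀ k : ℕ, d k ∈ L (w + (k : ZMod n))
    | 0 => by simpa [hd0] using hx
    | k + 1 => by
      have := (hd k).1
      simp only [M] at this
      split_ifs at this
      exacts [Finset.mem_of_mem_erase this, this]
  have hd_last : d (n - 1) ≠ x := by
    obtain ⟨k, hk⟩ : ∃ k, n - 1 = k + 1 := ⟨n - 2, by omega⟩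
    have := (hd k).1
    simp only [M, show k + 1 + 1 = n by omega, if_true] at this
    exact hk ▸ Finset.ne_of_mem_erase this
  refine ⟨fun v => d (v - w).val, fun v => by simpa using hd_mem (v - w).val, fun v => ?_⟩
  show d (v - w).val ≠ d (v + 1 - w).val
  set k := (v - w).val
  have hvk : v + 1 - w = ((k + 1 : ℕ) : ZMod n) := by
    rw [Nat.cast_add_one, ZMod.natCast_zmod_val]; ring
  rw [hvk]
  by_cases hk : k + 1 = n
  · rw [hk, ZMod.natCast_self, ZMod.val_zero, hd0, show k = n - 1 by omega]
    exact hd_last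
  · rw [ZMod.val_cast_of_lt (by have := ZMod.val_lt (v - w); omega)]
    exact (hd k).2.symm

theorem exists_mem_two_le_card_erase [DecidableEq α] {L : ZMod n → Finset α}
    (hL : ∀ v, 2 ≤ (L v).card) (hpair : ¬ ∃ A : Finset α, A.card = 2 ∧ ∀ v, L v = A) :
    ∃ w, ∃ x ∈ L w, 2 ≤ ((L (w - 1)).erase x).card := by
  by_cases hbig : ∃ v, 2 < (L v).card
  · obtain ⟨v, hv⟩ := hbig
    obtain ⟨x, hx⟩ := Finset.card_pos.mp (two_pos.trans_le (hL (v + 1)))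
    refine ⟨v + 1, x, hx, ?_⟩
    rw [add_sub_cancel_right]
    have := Finset.pred_card_le_card_erase (s := L v) (a := x)
    omega
  · push Not at hbig
    have hcard : ∀ v, (L v).card = 2 := fun v => le_antisymm (hbig v) (hL v)
    obtain ⟨u, hu⟩ : ∃ u, L (u + 1) ≠ L u := by
      by_contra! hper
      exact hpair ⟨L 0, hcard 0, fun v => Function.Periodic.apply_eq_of_isUnit hper isUnit_one 0 v⟩
    obtain ⟨x, hx, hxu⟩ := Finset.not_subset.mp fun hsub =>
      hu (Finset.eq_of_subset_of_card_le hsub (by rw [hcard, hcard]))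
    refine ⟨u + 1, x, hx, ?_⟩
    rw [add_sub_cancel_right, Finset.erase_eq_of_notMem hxu, hcard]

end

/-- An odd cycle `C_n` (vertices `ZMod n`, `n ≥ 3` odd) with lists of size at
least two admits a proper coloring from the lists if and only if the lists are
not all equal to a single common 2-element set. -/
theorem odd_cycle_list_coloring (n : ℕ) (hn : 3 ≤ n) (hodd : Odd n)
    (L : ZMod n → Finset ℕ) (hL : ∀ v, 2 ≤ (L v).card) :
    (∃ c : ZMod n → ℕ, (∀ v, c v ∈ L v) ∧ ∀ v, c v ≠ c (v + 1)) ↔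
      ¬ ∃ A : Finset ℕ, A.card = 2 ∧ ∀ v, L v = A := by
  constructor
  · rintro ⟨c, hc⟩ ⟨A, hA, hLA⟩
    obtain ⟨a, b, -, rfl⟩ := Finset.card_eq_two.mp hA
    exact not_isCycleListColoring_of_odd_of_eq_pair hodd hLA c hc
  · intro hpair
    obtain ⟨w, x, hx, hlast⟩ := exists_mem_two_le_card_erase hL hpair
    exact exists_isCycleListColoring_of_two_le_card_erase (by omega) hL hx hlast
end

section
/- Let s : ℕ → ℚ be defined by s(n) = 0 for n ≤ 4, s(5) = 4/4113, s(6) = 72/4113, s(7) = 540/4113, s(8) = 2184/4113, and s(n) = n − 8 for n ≥ 9. Then for all integers a, b ≥ 1 with a + b ≥ 5, s(a) + s(b) < s(a + b). -/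
/-- The weight function from the paper. -/
def s (n : ℕ) : ℚ :=
  if n ≤ 4 then 0
  else if n = 5 then 4/4113
  else if n = 6 then 72/4113
  else if n = 7 then 540/4113
  else if n = 8 then 2184/4113
  else (n : ℚ) - 8

lemma s_lt_self (n : ℕ) (hn : 1 ≤ n) : s n < n := by
  by_cases h : n ≤ 8
  · interval_cases n <;> norm_num [s]
  · push_neg at h
    have : s n = (n : ℚ) - 8 := by
      unfold s
      rw [if_neg (by omega), if_neg (by omega), if_neg (by omega), if_neg (by omega), if_neg (by omega)]
    rw [this]; linarith

lemma s_big (n : ℕ) (hn : 9 ≤ n) : s n = (n : ℚ) - 8 := by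
  unfold s
  rw [if_neg (by omega), if_neg (by omega), if_neg (by omega), if_neg (by omega), if_neg (by omega)]

/-- Strict superadditivity of `s`. -/
theorem s_strict_superadditive (a b : ℕ) (ha : 1 ≤ a) (hb : 1 ≤ b) (hab : 5 ≤ a + b) :
    s a + s b < s (a + b) := by
  by_cases hA : a ≤ 8
  · by_cases hB : b ≤ 8
    · interval_cases a <;> interval_cases b <;> simp_all <;> norm_num [s]
    · push_neg at hB
      rw [s_big b (by omega), s_big (a + b) (by omega), Nat.cast_add]
      have := s_lt_self a ha
      linarith
  · push_neg at hA
    rw [s_big a (by omega), s_big (a + b) (by omega), Nat.cast_add]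
    have := s_lt_self b hb
    linarith
end

section
/- Let G be a finite triangle-free simple graph on vertex set V, and let v₁, v₃ be distinct non-adjacent vertices of G such that there is no path of length 3 from v₁ to v₃, i.e., there are no vertices a, b with G.Adj v₁ a, G.Adj a b, and G.Adj b v₃. Let G' be the identification of v₁ and v₃ in G. Then G' is triangle-free: there are no three pairwise adjacent vertices in G'. -/
/-!
A triangle of the identified graph avoiding the merged vertex `v₁` is a triangle of `G`. A triangle
through `v₁` consists of `v₁` and an edge `bc` of `G` whose ends both lie in `N(v₁) ∪ N(v₃)`. This
union is independent: two adjacent vertices of `N(v₁)` (or of `N(v₃)`) would close a triangle of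
`G`, and an edge between `N(v₁)` and `N(v₃)` would be the middle of a path `v₁ b c v₃`.
-/

/-- The identification of two distinct non-adjacent vertices `v₁` and `v₃` of a
simple graph `G`: the graph on the vertex set `V \ {v₃}` in which distinct
vertices `u` and `w` are adjacent iff `G.Adj u w`, or `u = v₁` and
`G.Adj v₃ w`, or `w = v₁` and `G.Adj v₃ u`. -/
def identify {V : Type*} (G : SimpleGraph V) (v₁ v₃ : V) :
    SimpleGraph {u : V // u ≠ v₃} where
  Adj u w := u ≠ w ∧
    (G.Adj u.1 w.1 ∨ (u.1 = v₁ ∧ G.Adj v₃ w.1) ∨ (w.1 = v₁ ∧ G.Adj v₃ u.1))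
  symm := ⟨by
    rintro u w ⟨h1, h2 | h2 | h2⟩
    · exact ⟨h1.symm, Or.inl h2.symm⟩
    · exact ⟨h1.symm, Or.inr (Or.inr h2)⟩
    · exact ⟨h1.symm, Or.inr (Or.inl h2)⟩⟩
  loopless := ⟨fun u h => h.1 rfl⟩

namespace SimpleGraph

variable {V : Type*} {G : SimpleGraph V}

theorem cliqueFree_three_iff :
    G.CliqueFree 3 ↔ ∀ a b c : V, ¬ (G.Adj a b ∧ G.Adj b c ∧ G.Adj a c) := by
  classical
  refine ⟨fun h a b c ⟨hab, hbc, hac⟩ => h {a, b, c} (is3Clique_triple_iff.2 ⟨hab, hac, hbc⟩),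
    fun h s hs => ?_⟩
  obtain ⟨a, b, c, hab, hac, hbc, -⟩ := is3Clique_iff.1 hs
  exact h a b c ⟨hab, hbc, hac⟩

theorem isIndepSet_neighborSet_union_of_cliqueFree_three (hG : G.CliqueFree 3) {v₁ v₃ : V}
    (hpath : ¬ ∃ a b : V, G.Adj v₁ a ∧ G.Adj a b ∧ G.Adj b v₃) :
    G.IsIndepSet (G.neighborSet v₁ ∪ G.neighborSet v₃) := by
  rintro b (hb | hb) c (hc | hc) hbc hadj
  · exact isIndepSet_neighborSet_of_triangleFree _ hG v₁ hb hc hbc hadj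
  · exact hpath ⟨b, c, hb, hadj, G.adj_symm hc⟩
  · exact hpath ⟨c, b, hc, G.adj_symm hadj, G.adj_symm hb⟩
  · exact isIndepSet_neighborSet_of_triangleFree _ hG v₃ hb hc hbc hadj

end SimpleGraph

section identify

variable {V : Type*} {G : SimpleGraph V} {v₁ v₃ : V} {u w : {u : V // u ≠ v₃}}

theorem identify_adj_iff_of_ne (hu : u.1 ≠ v₁) (hw : w.1 ≠ v₁) :
    (identify G v₁ v₃).Adj u w ↔ G.Adj u.1 w.1 := by
  simp only [identify, hu, hw, false_and, or_false]
  exact ⟨And.right, fun h => ⟨fun huw => h.ne (congrArg Subtype.val huw), h⟩⟩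

theorem identify_adj_iff_of_eq (hu : u.1 = v₁) (hw : w.1 ≠ v₁) :
    (identify G v₁ v₃).Adj u w ↔ w.1 ∈ G.neighborSet v₁ ∪ G.neighborSet v₃ := by
  have huw : u ≠ w := fun h => hw (h ▸ hu)
  simp [identify, hu, hw, huw]

theorem not_identify_adj_of_adj_of_adj (hG : G.CliqueFree 3)
    (hpath : ¬ ∃ a b : V, G.Adj v₁ a ∧ G.Adj a b ∧ G.Adj b v₃) {a b c : {u : V // u ≠ v₃}}
    (ha : a.1 = v₁) (hab : (identify G v₁ v₃).Adj a b) (hac : (identify G v₁ v₃).Adj a c) :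
    ¬ (identify G v₁ v₃).Adj b c := by
  have hb : b.1 ≠ v₁ := fun hb => hab.ne (Subtype.ext (ha.trans hb.symm))
  have hc : c.1 ≠ v₁ := fun hc => hac.ne (Subtype.ext (ha.trans hc.symm))
  intro hbc
  rw [identify_adj_iff_of_eq ha hb] at hab
  rw [identify_adj_iff_of_eq ha hc] at hac
  exact SimpleGraph.isIndepSet_neighborSet_union_of_cliqueFree_three hG hpath hab hac
    (fun h => hbc.ne (Subtype.ext h)) ((identify_adj_iff_of_ne hb hc).1 hbc)

end identify

theorem identify_triangle_free_general {V : Type*} (G : SimpleGraph V)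
    (htf : ∀ a b c : V, ¬ (G.Adj a b ∧ G.Adj b c ∧ G.Adj a c))
    (v₁ v₃ : V)
    (hpath : ¬ ∃ a b : V, G.Adj v₁ a ∧ G.Adj a b ∧ G.Adj b v₃) :
    ∀ a b c : {u : V // u ≠ v₃},
      ¬ ((identify G v₁ v₃).Adj a b ∧ (identify G v₁ v₃).Adj b c ∧
          (identify G v₁ v₃).Adj a c) := by
  have hG : G.CliqueFree 3 := SimpleGraph.cliqueFree_three_iff.2 htf
  rintro a b c ⟨hab, hbc, hac⟩
  by_cases ha : a.1 = v₁
  · exact not_identify_adj_of_adj_of_adj hG hpath ha hab hac hbc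
  by_cases hb : b.1 = v₁
  · exact not_identify_adj_of_adj_of_adj hG hpath hb hab.symm hbc hac
  by_cases hc : c.1 = v₁
  · exact not_identify_adj_of_adj_of_adj hG hpath hc hac.symm hbc.symm hab
  rw [identify_adj_iff_of_ne ha hb] at hab
  rw [identify_adj_iff_of_ne hb hc] at hbc
  rw [identify_adj_iff_of_ne ha hc] at hac
  exact htf _ _ _ ⟨hab, hbc, hac⟩

/-- If `G` is triangle-free and there is no path of length 3 between the
distinct non-adjacent vertices `v₁` and `v₃`, then the identification of `v₁`
and `v₃` is triangle-free. -/
theorem identify_triangle_free {V : Type*} [Fintype V] (G : SimpleGraph V)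
    (htf : ∀ a b c : V, ¬ (G.Adj a b ∧ G.Adj b c ∧ G.Adj a c))
    (v₁ v₃ : V) (hne : v₁ ≠ v₃) (hnadj : ¬ G.Adj v₁ v₃)
    (hpath : ¬ ∃ a b : V, G.Adj v₁ a ∧ G.Adj a b ∧ G.Adj b v₃) :
    ∀ a b c : {u : V // u ≠ v₃},
      ¬ ((identify G v₁ v₃).Adj a b ∧ (identify G v₁ v₃).Adj b c ∧
          (identify G v₁ v₃).Adj a c) :=
  identify_triangle_free_general G htf v₁ v₃ hpath
end
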